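/- arXiv:2310.07024 — 6 statements merged into one kernel-verified Lean document; each statement's English description precedes it below -/
import Mathlib

section
/- Let K be a field, n a natural number, and A an n×n matrix with entries in the polynomial ring K[x] such that det A ≠ 0 (equivalently, A is invertible as a matrix over the rational function field K(x)). Then the cokernel K[x]ⁿ / A·K[x]ⁿ is a finite-dimensional K-vector space whose dimension over K equals the degree of the polynomial det A. -/
/-!
By the Smith normal form over the PID `K[X]`, the image of `A` has a basis `aᵢ • eᵢ` for some
basis `eᵢ` of `K[X]ⁿ`. Hence the cokernel is `⨁ K[X] ⧸ (aᵢ)`, of `K`-dimension `∑ deg aᵢ`, while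
`A` differs from `diag (aᵢ)` only by automorphisms, so `det A` is associated to `∏ aᵢ`.
-/

open Module Polynomial

namespace Submodule

variable {ι R M : Type*} [Fintype ι] [CommRing R] [IsDomain R] [IsPrincipalIdealRing R]
  [AddCommGroup M] [Module R M] {N : Submodule R M}

theorem det_subtype_comp_smithNormalForm_equiv (b : Basis ι R M)
    (h : finrank R N = finrank R M) :
    LinearMap.det (N.subtype ∘ₗ ((smithNormalFormTopBasis b h).equiv
        (smithNormalFormBotBasis b h) (Equiv.refl ι) : M →ₗ[R] N)) =
      ∏ i, smithNormalFormCoeffs b h i := by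
  classical
  rw [← LinearMap.det_toMatrix (smithNormalFormTopBasis b h), ← Matrix.det_diagonal]
  congr 1
  ext i j
  rcases eq_or_ne i j with rfl | hij
  · simp [LinearMap.toMatrix_apply]
  · simp [LinearMap.toMatrix_apply, hij]

theorem associated_det_prod_smithNormalFormCoeffs (b : Basis ι R M)
    (h : finrank R N = finrank R M) (e : M ≃ₗ[R] N) :
    Associated (LinearMap.det (N.subtype ∘ₗ e)) (∏ i, smithNormalFormCoeffs b h i) :=
  det_subtype_comp_smithNormalForm_equiv b h ▸ LinearMap.associated_det_comp_equiv _ _ _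

end Submodule

namespace Polynomial

variable {K : Type*} [Field K]

theorem finite_quotient_span_singleton {p : K[X]} (hp : p ≠ 0) :
    Module.Finite K (K[X] ⧸ Ideal.span {p}) :=
  (AdjoinRoot.powerBasis hp).finite

variable {M : Type*} [AddCommGroup M] [Module K[X] M] [Module.Free K[X] M] [Module.Finite K[X] M]
  [Module K M] [IsScalarTower K K[X] M]

theorem finite_quotient_range_and_finrank_eq_natDegree_det {f : M →ₗ[K[X]] M} (hf : f.det ≠ 0) :
    Module.Finite K (M ⧸ LinearMap.range f) ∧
      finrank K (M ⧸ LinearMap.range f) = f.det.natDegree := by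
  have hinj : Function.Injective f :=
    LinearMap.ker_eq_bot.mp (not_not.mp (mt LinearMap.det_eq_zero_iff_ker_ne_bot.mpr hf))
  let e := LinearEquiv.ofInjective f hinj
  have h : finrank K[X] (LinearMap.range f) = finrank K[X] M := e.finrank_eq.symm
  let b := Module.Free.chooseBasis K[X] M
  have hdet : Associated f.det (∏ i, Submodule.smithNormalFormCoeffs b h i) :=
    Submodule.associated_det_prod_smithNormalFormCoeffs b h e
  have : ∀ i, Module.Finite K (K[X] ⧸ Ideal.span {Submodule.smithNormalFormCoeffs b h i}) :=
    fun i => finite_quotient_span_singleton (Submodule.smithNormalFormCoeffs_ne_zero b h i)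
  refine ⟨.equiv ((Submodule.quotientEquivPiSpan _ b h).restrictScalars K).symm, ?_⟩
  rw [Submodule.finrank_quotient_eq_sum K b h]
  simp only [finrank_quotient_span_eq_natDegree]
  rw [← natDegree_prod _ _ fun i _ => Submodule.smithNormalFormCoeffs_ne_zero b h i,
    natDegree_eq_of_degree_eq (degree_eq_degree_of_associated hdet)]

end Polynomial

/-- If `A` is an `n × n` matrix over `K[x]` (`K` a field) with nonzero determinant, then the
cokernel `K[x]ⁿ / A·K[x]ⁿ` is a finite-dimensional `K`-vector space of dimension
`deg (det A)`. -/
theorem polynomial_matrix_cokernel_finrank_eq_natDegree_det (K : Type*) [Field K] (n : ℕ)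
    (A : Matrix (Fin n) (Fin n) (Polynomial K)) (hA : A.det ≠ 0) :
    FiniteDimensional K ((Fin n → Polynomial K) ⧸ LinearMap.range A.mulVecLin) ∧
      Module.finrank K ((Fin n → Polynomial K) ⧸ LinearMap.range A.mulVecLin) =
        A.det.natDegree := by
  rw [← Matrix.toLin'_apply', ← LinearMap.det_toLin']
  exact finite_quotient_range_and_finrank_eq_natDegree_det (by rwa [LinearMap.det_toLin'])
end

section
/- (Bruhat decomposition, existence.) Let F be a division ring and let A be an invertible n×n matrix over F. Then there exist n×n matrices L, D, P, U over F such that A = L·D·P·U, where L is lower triangular with all diagonal entries equal to 1, U is upper triangular with all diagonal entries equal to 1, D is an invertible diagonal matrix, and P is a permutation matrix (the 0-1 matrix of some permutation σ of {1,…,n}). -/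
open Matrix Finset

section
variable {F : Type*} [DivisionRing F] {m : ℕ}

lemma prod4_apply (L U : Matrix (Fin m) (Fin m) F) (d : Fin m → F) (σ : Equiv.Perm (Fin m))
    (r c : Fin m) :
    (L * Matrix.diagonal d * σ.permMatrix F * U) r c = ∑ k, L r k * (d k * U (σ k) c) := by
  have hDP : ∀ k c, (Matrix.diagonal d * σ.permMatrix F) k c = if σ k = c then d k else 0 := by
    intro k c
    rw [Matrix.diagonal_mul]
    simp only [Equiv.Perm.permMatrix, PEquiv.toMatrix_apply, Equiv.toPEquiv_apply,
      Option.mem_def, Option.some.injEq]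
    split <;> simp
  have h1 : (Matrix.diagonal d * σ.permMatrix F * U) = Matrix.of fun k c => d k * U (σ k) c := by
    ext k c
    rw [Matrix.mul_apply]
    simp only [hDP, ite_mul, zero_mul]
    rw [Finset.sum_ite_eq]
    simp
  calc (L * Matrix.diagonal d * σ.permMatrix F * U) r c
      = (L * (Matrix.diagonal d * σ.permMatrix F * U)) r c := by
        rw [Matrix.mul_assoc, Matrix.mul_assoc, Matrix.mul_assoc]
    _ = ∑ k, L r k * (d k * U (σ k) c) := by rw [h1, Matrix.mul_apply]; rfl

lemma mul_apply_col (N B : Matrix (Fin m) (Fin m) F) (i : Fin m)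
    (h : ∀ r c, c ≠ i → N r c = 0) (r c : Fin m) : (N * B) r c = N r i * B i c := by
  rw [Matrix.mul_apply]
  exact Finset.sum_eq_single i (fun k _ hk => by rw [h r k hk, zero_mul]) (by simp)

lemma mul_apply_row (B M : Matrix (Fin m) (Fin m) F) (i : Fin m)
    (h : ∀ r c, r ≠ i → M r c = 0) (r c : Fin m) : (B * M) r c = B r i * M i c := by
  rw [Matrix.mul_apply]
  exact Finset.sum_eq_single i (fun k _ hk => by rw [h k c hk, mul_zero]) (by simp)

lemma lower_mul_diag (L₁ L₂ : Matrix (Fin m) (Fin m) F)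
    (h1d : ∀ i, L₁ i i = 1) (h1 : ∀ i j, i < j → L₁ i j = 0)
    (h2d : ∀ i, L₂ i i = 1) (h2 : ∀ i j, i < j → L₂ i j = 0) :
    ∀ i, (L₁ * L₂) i i = 1 := by
  intro i
  rw [Matrix.mul_apply, Finset.sum_eq_single i]
  · rw [h1d, h2d, one_mul]
  · intro k _ hk
    rcases lt_or_gt_of_ne hk with h | h
    · rw [h2 k i h, mul_zero]
    · rw [h1 i k h, zero_mul]
  · simp

lemma lower_mul_lower (L₁ L₂ : Matrix (Fin m) (Fin m) F)
    (h1 : ∀ i j, i < j → L₁ i j = 0) (h2 : ∀ i j, i < j → L₂ i j = 0) :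
    ∀ i j, i < j → (L₁ * L₂) i j = 0 := by
  intro i j hij
  rw [Matrix.mul_apply]
  apply Finset.sum_eq_zero
  intro k _
  rcases lt_or_ge i k with h | h
  · rw [h1 i k h, zero_mul]
  · rw [h2 k j (lt_of_le_of_lt h hij), mul_zero]

lemma upper_mul_diag (U₁ U₂ : Matrix (Fin m) (Fin m) F)
    (h1d : ∀ i, U₁ i i = 1) (h1 : ∀ i j, j < i → U₁ i j = 0)
    (h2d : ∀ i, U₂ i i = 1) (h2 : ∀ i j, j < i → U₂ i j = 0) :
    ∀ i, (U₁ * U₂) i i = 1 := by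
  intro i
  rw [Matrix.mul_apply, Finset.sum_eq_single i]
  · rw [h1d, h2d, one_mul]
  · intro k _ hk
    rcases lt_or_gt_of_ne hk with h | h
    · rw [h1 i k h, zero_mul]
    · rw [h2 k i h, mul_zero]
  · simp

lemma upper_mul_upper (U₁ U₂ : Matrix (Fin m) (Fin m) F)
    (h1 : ∀ i j, j < i → U₁ i j = 0) (h2 : ∀ i j, j < i → U₂ i j = 0) :
    ∀ i j, j < i → (U₁ * U₂) i j = 0 := by
  intro i j hij
  rw [Matrix.mul_apply]
  apply Finset.sum_eq_zero
  intro k _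
  rcases lt_or_ge k i with h | h
  · rw [h1 i k h, zero_mul]
  · rw [h2 k j (lt_of_lt_of_le hij h), mul_zero]

lemma bruhat_aux : ∀ (n : ℕ) (A : Matrix (Fin n) (Fin n) F), IsUnit A →
    ∃ (L U : Matrix (Fin n) (Fin n) F) (d : Fin n → F) (σ : Equiv.Perm (Fin n)),
      (∀ i, L i i = 1) ∧ (∀ i j : Fin n, i < j → L i j = 0) ∧
      (∀ i, U i i = 1) ∧ (∀ i j : Fin n, j < i → U i j = 0) ∧
      (∀ i, d i ≠ 0) ∧
      A = L * Matrix.diagonal d * σ.permMatrix F * U := by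
  intro n
  induction n with
  | zero =>
    intro A _
    refine ⟨1, 1, fun i => i.elim0, 1, ?_, ?_, ?_, ?_, ?_, ?_⟩ <;>
      first
      | exact fun i => i.elim0
      | exact fun i j _ => i.elim0
      | (ext i j; exact i.elim0)
  | succ n IH =>
    intro A hA
    -- pivot: minimal row with nonzero entry in column 0
    have hex : ∃ r : Fin (n + 1), A r 0 ≠ 0 := by
      by_contra h
      push_neg at h
      obtain ⟨u, hu⟩ := hA
      have h0 := u.inv_mul
      rw [hu] at h0
      have h1 := congrFun (congrFun h0 0) 0
      rw [Matrix.mul_apply, Matrix.one_apply_eq] at h1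
      simp only [h, mul_zero, Finset.sum_const_zero] at h1
      exact zero_ne_one h1
    classical
    set S : Finset (Fin (n+1)) := Finset.univ.filter (fun r => A r 0 ≠ 0) with hS
    have hSne : S.Nonempty := by
      obtain ⟨r, hr⟩ := hex
      exact ⟨r, by simp [hS, hr]⟩
    set i : Fin (n+1) := S.min' hSne with hi
    have ha : A i 0 ≠ 0 := by
      have := S.min'_mem hSne
      simp [hS] at this
      exact this
    have hmin : ∀ r, r < i → A r 0 = 0 := by
      intro r hr
      by_contra hr0
      exact absurd (S.min'_le r (by simp [hS, hr0])) (not_le.mpr hr)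
    set a : F := A i 0 with ha'
    -- elimination matrices
    set N : Matrix (Fin (n+1)) (Fin (n+1)) F :=
      Matrix.of (fun r c => if c = i ∧ r ≠ i then A r 0 * a⁻¹ else 0) with hN
    set M : Matrix (Fin (n+1)) (Fin (n+1)) F :=
      Matrix.of (fun r c => if r = 0 ∧ c ≠ 0 then a⁻¹ * A i c else 0) with hM
    set B : Matrix (Fin (n+1)) (Fin (n+1)) F :=
      Matrix.of (fun r c => if r = i then (if c = 0 then a else 0)
        else A r c - A r 0 * a⁻¹ * A i c) with hB
    have hNcol : ∀ r c, c ≠ i → N r c = 0 := by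
      intro r c hc; simp [hN, hc]
    have hMrow : ∀ r c, r ≠ 0 → M r c = 0 := by
      intro r c hr; simp [hM, hr]
    have hNi : ∀ c, N i c = 0 := by intro c; simp [hN]
    have hM0 : ∀ r, M r 0 = 0 := by intro r; simp [hM]
    have hNN : N * N = 0 := by
      ext r c
      rw [mul_apply_col N N i hNcol, hNi, mul_zero, Matrix.zero_apply]
    have hMM : M * M = 0 := by
      ext r c
      rw [mul_apply_row M M 0 hMrow, hM0, zero_mul, Matrix.zero_apply]
    have hBi : ∀ c, c ≠ 0 → B i c = 0 := by intro c hc; simp [hB, hc]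
    have hBi0 : B i 0 = a := by simp [hB]
    have hB0 : ∀ r, r ≠ i → B r 0 = 0 := by
      intro r hr
      simp only [hB, Matrix.of_apply, if_neg hr, if_pos rfl]
      rw [mul_assoc, inv_mul_cancel₀ ha, mul_one, sub_self]
    -- the key factorization A = (1+N) * B * (1+M)
    have hNri : ∀ r, r ≠ i → N r i = A r 0 * a⁻¹ := by
      intro r hr; simp [hN, hr]
    have hM0c : ∀ c : Fin (n+1), c ≠ 0 → M 0 c = a⁻¹ * A i c := by
      intro c hc; simp [hM, hc]
    have hBr : ∀ r c, r ≠ i → B r c = A r c - A r 0 * a⁻¹ * A i c := by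
      intro r c hr; simp [hB, hr]
    have hcancel : ∀ x : F, x * a⁻¹ * a = x := by
      intro x; rw [mul_assoc, inv_mul_cancel₀ ha, mul_one]
    have hfac : A = (1 + N) * B * (1 + M) := by
      have hNB : N * B = Matrix.of fun r c => N r i * B i c := by
        ext r c; rw [mul_apply_col N B i hNcol]; rfl
      have expand : (1 + N) * B * (1 + M) = B + N * B + (B * M + N * B * M) := by
        noncomm_ring
      rw [expand]
      ext r c
      simp only [Matrix.add_apply]
      rw [mul_apply_row B M 0 hMrow, mul_apply_row (N*B) M 0 hMrow, hNB]
      simp only [Matrix.of_apply]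
      by_cases hr : r = i
      · subst hr
        rw [hNi i]
        by_cases hc : c = 0
        · subst hc
          rw [hM0 0, hBi0, ← ha']
          noncomm_ring
        · rw [hBi c hc, hM0c c hc, hBi0, ← mul_assoc, mul_inv_cancel₀ ha]
          noncomm_ring
      · by_cases hc : c = 0
        · subst hc
          rw [hM0 0, hB0 r hr, hNri r hr, hBi0, hcancel]
          noncomm_ring
        · rw [hNri r hr, hBr r c hr, hBi c hc, hB0 r hr, hM0c c hc, hBi0, hcancel, ← mul_assoc]
          noncomm_ring
    -- B is a unit
    have key : ∀ X : Matrix (Fin (n+1)) (Fin (n+1)) F, X * X = 0 →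
        (1 + X) * (1 - X) = 1 ∧ (1 - X) * (1 + X) = 1 := by
      intro X hX
      constructor
      · have h : (1 + X) * (1 - X) = 1 - X * X := by noncomm_ring
        rw [h, hX, sub_zero]
      · have h : (1 - X) * (1 + X) = 1 - X * X := by noncomm_ring
        rw [h, hX, sub_zero]
    have hNunit := key N hNN
    have hMunit := key M hMM
    have hBunit : IsUnit B := by
      have hL1 : IsUnit (1 + N) := ⟨⟨1 + N, 1 - N, hNunit.1, hNunit.2⟩, rfl⟩
      have hU1 : IsUnit (1 + M) := ⟨⟨1 + M, 1 - M, hMunit.1, hMunit.2⟩, rfl⟩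
      have heq : B = (1 - N) * A * (1 - M) := by
        rw [hfac]
        symm
        calc (1 - N) * ((1 + N) * B * (1 + M)) * (1 - M)
            = ((1 - N) * (1 + N)) * B * ((1 + M) * (1 - M)) := by noncomm_ring
          _ = B := by rw [hNunit.2, hMunit.1, one_mul, mul_one]
      rw [heq]
      have hL2 : IsUnit ((1:Matrix (Fin (n+1)) (Fin (n+1)) F) - N) :=
        ⟨⟨1 - N, 1 + N, hNunit.2, hNunit.1⟩, rfl⟩
      have hU2 : IsUnit ((1:Matrix (Fin (n+1)) (Fin (n+1)) F) - M) :=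
        ⟨⟨1 - M, 1 + M, hMunit.2, hMunit.1⟩, rfl⟩
      exact (hL2.mul hA).mul hU2
    obtain ⟨u, hu⟩ := hBunit
    set C : Matrix (Fin (n+1)) (Fin (n+1)) F := Units.val u⁻¹ with hC
    have hBC : B * C = 1 := by rw [hC, ← hu]; exact u.mul_inv
    have hCB : C * B = 1 := by rw [hC, ← hu]; exact u.inv_mul
    -- submatrix
    set B' : Matrix (Fin n) (Fin n) F := B.submatrix i.succAbove Fin.succ with hB'
    set C' : Matrix (Fin n) (Fin n) F := C.submatrix Fin.succ i.succAbove with hC'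
    have hB'unit : IsUnit B' := by
      have h1 : B' * C' = 1 := by
        ext k l
        rw [Matrix.mul_apply]
        have := congrFun (congrFun hBC (i.succAbove k)) (i.succAbove l)
        rw [Matrix.mul_apply, Fin.sum_univ_succ] at this
        rw [hB0 _ (Fin.succAbove_ne i k), zero_mul, zero_add] at this
        simp only [hB', hC', Matrix.submatrix_apply]
        rw [this, Matrix.one_apply, Matrix.one_apply]
        simp [Fin.succAbove_right_injective.eq_iff]
      have h2 : C' * B' = 1 := by
        ext k l
        rw [Matrix.mul_apply]
        have := congrFun (congrFun hCB (Fin.succ k)) (Fin.succ l)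
        rw [Matrix.mul_apply, Fin.sum_univ_succAbove _ i] at this
        rw [hBi _ (Fin.succ_ne_zero l), mul_zero, zero_add] at this
        simp only [hB', hC', Matrix.submatrix_apply]
        rw [this, Matrix.one_apply, Matrix.one_apply]
        simp [Fin.succ_injective _ |>.eq_iff]
      exact ⟨⟨B', C', h1, h2⟩, rfl⟩
    obtain ⟨L', U', d', σ', hL'd, hL'low, hU'd, hU'up, hd', hfac'⟩ := IH B' hB'unit
    -- build the (n+1)-sized data
    set σ : Equiv.Perm (Fin (n+1)) :=
      (finSuccEquiv' i).trans ((Equiv.optionCongr σ').trans (finSuccEquiv n).symm) with hσ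
    have hσi : σ i = 0 := by
      simp [hσ, finSuccEquiv'_at, finSuccEquiv_symm_none]
    have hσs : ∀ k : Fin n, σ (i.succAbove k) = (σ' k).succ := by
      intro k
      simp [hσ, finSuccEquiv'_succAbove, finSuccEquiv_symm_some]
    set d : Fin (n+1) → F := i.insertNth a d' with hd
    have hdi : d i = a := by simp [hd]
    have hds : ∀ k : Fin n, d (i.succAbove k) = d' k := by
      intro k; simp [hd, Fin.insertNth_apply_succAbove]
    set L₂ : Matrix (Fin (n+1)) (Fin (n+1)) F :=
      Matrix.of (i.insertNth (i.insertNth 1 0) (fun k => i.insertNth 0 (L' k))) with hL₂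
    have hL₂ii : L₂ i i = 1 := by simp [hL₂]
    have hL₂is : ∀ l : Fin n, L₂ i (i.succAbove l) = 0 := by
      intro l
      simp [hL₂, Fin.insertNth_apply_succAbove, Pi.single_eq_of_ne (Fin.succAbove_ne i l)]
    have hL₂si : ∀ k : Fin n, L₂ (i.succAbove k) i = 0 := by
      intro k; simp [hL₂, Fin.insertNth_apply_succAbove]
    have hL₂ss : ∀ k l : Fin n, L₂ (i.succAbove k) (i.succAbove l) = L' k l := by
      intro k l; simp [hL₂, Fin.insertNth_apply_succAbove]
    set U₂ : Matrix (Fin (n+1)) (Fin (n+1)) F :=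
      Matrix.of (Fin.cons (Fin.cons (1:F) 0) (fun k => Fin.cons 0 (U' k))) with hU₂
    have hU₂00 : U₂ 0 0 = 1 := by simp [hU₂]
    have hU₂0s : ∀ l : Fin n, U₂ 0 l.succ = 0 := by intro l; simp [hU₂]
    have hU₂s0 : ∀ k : Fin n, U₂ k.succ 0 = 0 := by intro k; simp [hU₂]
    have hU₂ss : ∀ k l : Fin n, U₂ k.succ l.succ = U' k l := by intro k l; simp [hU₂]
    -- B = L₂ * D * P * U₂
    have hBfac : B = L₂ * Matrix.diagonal d * σ.permMatrix F * U₂ := by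
      ext r c
      rw [prod4_apply, Fin.sum_univ_succAbove _ i]
      simp only [hσi, hσs, hdi, hds]
      rcases eq_or_ne r i with rfl | hr
      · rw [hL₂ii, one_mul,
          Finset.sum_eq_zero (fun l _ => by rw [hL₂is l, zero_mul]), add_zero]
        rcases Fin.eq_zero_or_eq_succ c with rfl | ⟨m, rfl⟩
        · rw [hBi0, hU₂00, mul_one]
        · rw [hBi _ (Fin.succ_ne_zero m), hU₂0s, mul_zero]
      · obtain ⟨k, rfl⟩ := Fin.exists_succAbove_eq hr
        rw [hL₂si, zero_mul, zero_add]
        rcases Fin.eq_zero_or_eq_succ c with rfl | ⟨m, rfl⟩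
        · rw [hB0 _ (Fin.succAbove_ne i k),
            Finset.sum_eq_zero (fun l _ => by rw [hU₂s0, mul_zero, mul_zero])]
        · have h1 : B (i.succAbove k) m.succ = B' k m := by simp [hB']
          rw [h1, hfac', prod4_apply]
          exact Finset.sum_congr rfl (fun l _ => by rw [hU₂ss, hL₂ss])
    -- triangularity of the elimination matrices
    have hL₁d : ∀ r, (1 + N) r r = 1 := by
      intro r
      simp only [Matrix.add_apply, Matrix.one_apply_eq, hN, Matrix.of_apply]
      simp
    have hL₁low : ∀ r c, r < c → (1 + N) r c = 0 := by
      intro r c hrc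
      simp only [Matrix.add_apply, Matrix.one_apply_ne (ne_of_lt hrc), hN, Matrix.of_apply]
      rw [zero_add]
      split
      · next h =>
        rw [hmin r (h.1 ▸ hrc), zero_mul]
      · rfl
    have hU₁d : ∀ r, (1 + M) r r = 1 := by
      intro r
      simp only [Matrix.add_apply, Matrix.one_apply_eq, hM, Matrix.of_apply]
      simp
    have hU₁up : ∀ r c, c < r → (1 + M) r c = 0 := by
      intro r c hcr
      simp only [Matrix.add_apply, Matrix.one_apply_ne (ne_of_gt hcr), hM, Matrix.of_apply]
      rw [zero_add]
      split
      · next h =>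
        exact absurd (h.1 ▸ hcr) (Fin.not_lt_zero c)
      · rfl
    -- triangularity of L₂, U₂
    have hL₂d : ∀ r, L₂ r r = 1 := by
      intro r
      rcases eq_or_ne r i with rfl | hr
      · exact hL₂ii
      · obtain ⟨k, rfl⟩ := Fin.exists_succAbove_eq hr
        rw [hL₂ss, hL'd]
    have hL₂low : ∀ r c, r < c → L₂ r c = 0 := by
      intro r c hrc
      rcases eq_or_ne r i with rfl | hr
      · obtain ⟨l, rfl⟩ := Fin.exists_succAbove_eq (ne_of_gt hrc)
        exact hL₂is l
      · obtain ⟨k, rfl⟩ := Fin.exists_succAbove_eq hr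
        rcases eq_or_ne c i with rfl | hc
        · exact hL₂si k
        · obtain ⟨l, rfl⟩ := Fin.exists_succAbove_eq hc
          rw [hL₂ss]
          exact hL'low k l (Fin.succAbove_lt_succAbove_iff.mp hrc)
    have hU₂d : ∀ r, U₂ r r = 1 := by
      intro r
      rcases Fin.eq_zero_or_eq_succ r with rfl | ⟨k, rfl⟩
      · exact hU₂00
      · rw [hU₂ss, hU'd]
    have hU₂up : ∀ r c, c < r → U₂ r c = 0 := by
      intro r c hcr
      rcases Fin.eq_zero_or_eq_succ r with rfl | ⟨k, rfl⟩
      · exact absurd hcr (Fin.not_lt_zero c)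
      · rcases Fin.eq_zero_or_eq_succ c with rfl | ⟨l, rfl⟩
        · exact hU₂s0 k
        · rw [hU₂ss]
          exact hU'up k l (Fin.succ_lt_succ_iff.mp hcr)
    have hdnz : ∀ r, d r ≠ 0 := by
      intro r
      rcases eq_or_ne r i with rfl | hr
      · rw [hdi]; exact ha
      · obtain ⟨k, rfl⟩ := Fin.exists_succAbove_eq hr
        rw [hds]; exact hd' k
    refine ⟨(1 + N) * L₂, U₂ * (1 + M), d, σ, ?_, ?_, ?_, ?_, hdnz, ?_⟩
    · exact lower_mul_diag _ _ hL₁d hL₁low hL₂d hL₂low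
    · exact lower_mul_lower _ _ hL₁low hL₂low
    · exact upper_mul_diag _ _ hU₂d hU₂up hU₁d hU₁up
    · exact upper_mul_upper _ _ hU₂up hU₁up
    · rw [hfac, hBfac]
      simp only [Matrix.mul_assoc]
end

/-- **Bruhat decomposition, existence.** Every invertible square matrix `A` over a division
ring `F` can be written as `A = L * D * P * U` with `L` lower unitriangular, `D` invertible
diagonal, `P` a permutation matrix and `U` upper unitriangular. -/
theorem bruhat_decomposition_exists (F : Type*) [DivisionRing F] (n : ℕ)
    (A : Matrix (Fin n) (Fin n) F) (hA : IsUnit A) :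
    ∃ (L U : Matrix (Fin n) (Fin n) F) (d : Fin n → F) (σ : Equiv.Perm (Fin n)),
      (∀ i, L i i = 1) ∧ (∀ i j : Fin n, i < j → L i j = 0) ∧
      (∀ i, U i i = 1) ∧ (∀ i j : Fin n, j < i → U i j = 0) ∧
      (∀ i, d i ≠ 0) ∧
      A = L * Matrix.diagonal d * σ.permMatrix F * U := by
  exact bruhat_aux n A hA
end

section
/- (Bruhat decomposition, uniqueness.) Let F be a division ring and let A be an invertible n×n matrix over F. If A = L·D·P·U = L'·D'·P'·U' are two decompositions in which L, L' are lower triangular with all diagonal entries 1, U, U' are upper triangular with all diagonal entries 1, D, D' are invertible diagonal matrices, and P, P' are permutation matrices, then D = D' and P = P'. -/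
open Matrix Finset

section BruhatAux

variable {R : Type*} [Ring R] {n : ℕ}

private lemma slt_pow {N : Matrix (Fin n) (Fin n) R}
    (hN : ∀ i j : Fin n, i ≤ j → N i j = 0) (k : ℕ) :
    ∀ i j : Fin n, (i : ℕ) < (j : ℕ) + k → (N ^ k) i j = 0 := by
  induction k with
  | zero =>
    intro i j h
    simp only [pow_zero, Matrix.one_apply]
    rw [if_neg]
    rintro rfl; omega
  | succ k ih =>
    intro i j h
    rw [pow_succ, Matrix.mul_apply]
    apply Finset.sum_eq_zero
    intro l _
    by_cases hl : (i : ℕ) < (l : ℕ) + k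
    · rw [ih i l hl, zero_mul]
    · rw [hN l j (by rw [Fin.le_def]; omega), mul_zero]

private lemma sut_pow {N : Matrix (Fin n) (Fin n) R}
    (hN : ∀ i j : Fin n, j ≤ i → N i j = 0) (k : ℕ) :
    ∀ i j : Fin n, (j : ℕ) < (i : ℕ) + k → (N ^ k) i j = 0 := by
  induction k with
  | zero =>
    intro i j h
    simp only [pow_zero, Matrix.one_apply]
    rw [if_neg]
    rintro rfl; omega
  | succ k ih =>
    intro i j h
    rw [pow_succ', Matrix.mul_apply]
    apply Finset.sum_eq_zero
    intro l _
    by_cases hl : (j : ℕ) < (l : ℕ) + k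
    · rw [ih l j hl, mul_zero]
    · rw [hN i l (by rw [Fin.le_def]; omega), zero_mul]

private lemma geom_inv {N : Matrix (Fin n) (Fin n) R} (hnil : N ^ n = 0) :
    (1 - N) * (∑ k ∈ Finset.range n, N ^ k) = 1 ∧
      (∑ k ∈ Finset.range n, N ^ k) * (1 - N) = 1 := by
  constructor
  · have h := mul_geom_sum N n
    rw [hnil, zero_sub] at h
    rw [← neg_sub N 1, neg_mul, h, neg_neg]
  · have h := geom_sum_mul N n
    rw [hnil, zero_sub] at h
    rw [← neg_sub N 1, mul_neg, h, neg_neg]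

private lemma lower_unitri_inv (L : Matrix (Fin n) (Fin n) R)
    (h1 : ∀ i, L i i = 1) (h0 : ∀ i j : Fin n, i < j → L i j = 0) :
    ∃ S : Matrix (Fin n) (Fin n) R, L * S = 1 ∧ S * L = 1 ∧
      (∀ i, S i i = 1) ∧ (∀ i j : Fin n, i < j → S i j = 0) := by
  set N : Matrix (Fin n) (Fin n) R := 1 - L with hNdef
  have hN : ∀ i j : Fin n, i ≤ j → N i j = 0 := by
    intro i j hij
    rcases eq_or_lt_of_le hij with rfl | hlt
    · simp [hNdef, Matrix.sub_apply, Matrix.one_apply, h1]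
    · simp [hNdef, Matrix.sub_apply, Matrix.one_apply_ne (ne_of_lt hlt), h0 i j hlt]
  have hnil : N ^ n = 0 := by
    ext i j
    rw [slt_pow hN n i j (by have := i.isLt; omega)]
    simp
  obtain ⟨hA, hB⟩ := geom_inv hnil
  have hL : L = 1 - N := by simp [hNdef]
  refine ⟨∑ k ∈ Finset.range n, N ^ k, by rw [hL]; exact hA, by rw [hL]; exact hB, ?_, ?_⟩
  · intro i
    rw [Matrix.sum_apply]
    rw [Finset.sum_eq_single_of_mem 0 (Finset.mem_range.2 i.pos)]
    · simp
    · intro k _ hk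
      exact slt_pow hN k i i (by omega)
  · intro i j hij
    rw [Matrix.sum_apply]
    apply Finset.sum_eq_zero
    intro k _
    exact slt_pow hN k i j (by have : (i : ℕ) < j := hij; omega)

private lemma upper_unitri_inv (U : Matrix (Fin n) (Fin n) R)
    (h1 : ∀ i, U i i = 1) (h0 : ∀ i j : Fin n, j < i → U i j = 0) :
    ∃ S : Matrix (Fin n) (Fin n) R, U * S = 1 ∧ S * U = 1 ∧
      (∀ i, S i i = 1) ∧ (∀ i j : Fin n, j < i → S i j = 0) := by
  set N : Matrix (Fin n) (Fin n) R := 1 - U with hNdef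
  have hN : ∀ i j : Fin n, j ≤ i → N i j = 0 := by
    intro i j hij
    rcases eq_or_lt_of_le hij with rfl | hlt
    · simp [hNdef, Matrix.sub_apply, Matrix.one_apply, h1]
    · simp [hNdef, Matrix.sub_apply, Matrix.one_apply_ne (ne_of_lt hlt).symm, h0 i j hlt]
  have hnil : N ^ n = 0 := by
    ext i j
    rw [sut_pow hN n i j (by have := j.isLt; omega)]
    simp
  obtain ⟨hA, hB⟩ := geom_inv hnil
  have hU : U = 1 - N := by simp [hNdef]
  refine ⟨∑ k ∈ Finset.range n, N ^ k, by rw [hU]; exact hA, by rw [hU]; exact hB, ?_, ?_⟩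
  · intro i
    rw [Matrix.sum_apply]
    rw [Finset.sum_eq_single_of_mem 0 (Finset.mem_range.2 i.pos)]
    · simp
    · intro k _ hk
      exact sut_pow hN k i i (by omega)
  · intro i j hij
    rw [Matrix.sum_apply]
    apply Finset.sum_eq_zero
    intro k _
    exact sut_pow hN k i j (by have : (j : ℕ) < i := hij; omega)

private lemma lt_mul_diag {A B : Matrix (Fin n) (Fin n) R}
    (hA : ∀ i j : Fin n, i < j → A i j = 0) (hB : ∀ i j : Fin n, i < j → B i j = 0)
    (i : Fin n) : (A * B) i i = A i i * B i i := by
  rw [Matrix.mul_apply]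
  apply Finset.sum_eq_single_of_mem i (Finset.mem_univ i)
  intro k _ hk
  rcases lt_or_gt_of_ne hk with h | h
  · rw [hB k i h, mul_zero]
  · rw [hA i k h, zero_mul]

private lemma ut_mul_diag {A B : Matrix (Fin n) (Fin n) R}
    (hA : ∀ i j : Fin n, j < i → A i j = 0) (hB : ∀ i j : Fin n, j < i → B i j = 0)
    (i : Fin n) : (A * B) i i = A i i * B i i := by
  rw [Matrix.mul_apply]
  apply Finset.sum_eq_single_of_mem i (Finset.mem_univ i)
  intro k _ hk
  rcases lt_or_gt_of_ne hk with h | h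
  · rw [hA i k h, zero_mul]
  · rw [hB k i h, mul_zero]

private lemma ut_mul_zero {A B : Matrix (Fin n) (Fin n) R}
    (hA : ∀ i j : Fin n, j < i → A i j = 0) (hB : ∀ i j : Fin n, j < i → B i j = 0)
    (i j : Fin n) (hij : j < i) : (A * B) i j = 0 := by
  rw [Matrix.mul_apply]
  apply Finset.sum_eq_zero
  intro k _
  by_cases h : k < i
  · rw [hA i k h, zero_mul]
  · rw [hB k j (lt_of_lt_of_le hij (not_lt.1 h)), mul_zero]

end BruhatAux

/-- **Bruhat decomposition, uniqueness.** If an invertible square matrix `A` over a division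
ring `F` has two decompositions `A = L * D * P * U = L' * D' * P' * U'` with `L, L'` lower
unitriangular, `D, D'` invertible diagonal, `P, P'` permutation matrices and `U, U'` upper
unitriangular, then `D = D'` and `P = P'`. -/
theorem bruhat_decomposition_unique (F : Type*) [DivisionRing F] (n : ℕ)
    (A : Matrix (Fin n) (Fin n) F) (hA : IsUnit A)
    (L L' U U' : Matrix (Fin n) (Fin n) F) (d d' : Fin n → F) (σ σ' : Equiv.Perm (Fin n))
    (hL1 : ∀ i, L i i = 1) (hL0 : ∀ i j : Fin n, i < j → L i j = 0)
    (hL'1 : ∀ i, L' i i = 1) (hL'0 : ∀ i j : Fin n, i < j → L' i j = 0)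
    (hU1 : ∀ i, U i i = 1) (hU0 : ∀ i j : Fin n, j < i → U i j = 0)
    (hU'1 : ∀ i, U' i i = 1) (hU'0 : ∀ i j : Fin n, j < i → U' i j = 0)
    (hd : ∀ i, d i ≠ 0) (hd' : ∀ i, d' i ≠ 0)
    (hdec : A = L * Matrix.diagonal d * σ.permMatrix F * U)
    (hdec' : A = L' * Matrix.diagonal d' * σ'.permMatrix F * U') :
    Matrix.diagonal d = Matrix.diagonal d' ∧ σ.permMatrix F = σ'.permMatrix F := by
  obtain ⟨SL, hLS, hSL, hSd, hS0⟩ := lower_unitri_inv L' hL'1 hL'0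
  obtain ⟨SU, hUS, hSU, hTd, hT0⟩ := upper_unitri_inv U hU1 hU0
  set X : Matrix (Fin n) (Fin n) F := SL * L with hX
  set Y : Matrix (Fin n) (Fin n) F := U' * SU with hY
  have h0 : L * Matrix.diagonal d * σ.permMatrix F * U
      = L' * Matrix.diagonal d' * σ'.permMatrix F * U' := hdec ▸ hdec'
  have key : (X * Matrix.diagonal d) * σ.permMatrix F
      = Matrix.diagonal d' * (σ'.permMatrix F * Y) := by
    have h1 := congrArg (fun M => SL * M * SU) h0
    simp only [mul_assoc] at h1
    rw [hUS, mul_one, ← mul_assoc SL L', hSL, one_mul] at h1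
    rw [hX, hY]
    simp only [mul_assoc]
    exact h1
  rw [show (σ.permMatrix F) = σ.toPEquiv.toMatrix from rfl,
      show (σ'.permMatrix F) = σ'.toPEquiv.toMatrix from rfl,
      PEquiv.mul_toMatrix_toPEquiv, PEquiv.toMatrix_toPEquiv_mul] at key
  have ent : ∀ i k : Fin n, X i k * d k = d' i * Y (σ' i) (σ k) := by
    intro i k
    have h := congrFun (congrFun key i) (σ k)
    simpa [Matrix.submatrix_apply, Matrix.mul_diagonal, Matrix.diagonal_mul] using h
  have hXd : ∀ i, X i i = 1 := by
    intro i
    rw [hX, lt_mul_diag hS0 hL0, hSd, hL1, one_mul]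
  have hYd : ∀ i, Y i i = 1 := by
    intro i
    rw [hY, ut_mul_diag hU'0 hT0, hU'1, hTd, one_mul]
  have hY0 : ∀ i j : Fin n, j < i → Y i j = 0 := fun i j hij => ut_mul_zero hU'0 hT0 i j hij
  have step1 : ∀ i, σ' i ≤ σ i := by
    intro i
    by_contra hlt
    push_neg at hlt
    have h := ent i i
    rw [hXd i, one_mul, hY0 _ _ hlt, mul_zero] at h
    exact hd i h
  have hperm : σ' = σ := by
    have hsum : ∑ i : Fin n, ((σ' i : ℕ)) = ∑ i : Fin n, ((σ i : ℕ)) := by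
      rw [Equiv.sum_comp σ' (fun j : Fin n => (j : ℕ)),
        Equiv.sum_comp σ (fun j : Fin n => (j : ℕ))]
    have hle : ∀ i ∈ Finset.univ (α := Fin n), ((σ' i : ℕ)) ≤ ((σ i : ℕ)) :=
      fun i _ => step1 i
    have := (Finset.sum_eq_sum_iff_of_le hle).1 hsum
    exact Equiv.ext fun i => Fin.ext (this i (Finset.mem_univ i))
  have hdd : d = d' := by
    funext i
    have h := ent i i
    rw [hXd i, one_mul, hperm, hYd] at h
    rw [h, mul_one]
  exact ⟨by rw [hdd], by rw [hperm]⟩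
end

section
/- (Relators of a free-by-cyclic presentation are not proper powers.) Let n ≥ 1 and let G be the free group on the set {x₁, …, xₙ, t} (formally, the free group on Fin n ⊕ Unit, with t the generator coming from Unit). Let ι denote the inclusion homomorphism from the free group on {x₁, …, xₙ} into G, and let φ be an automorphism of the free group on {x₁, …, xₙ}. For each i define rᵢ := t · ι(xᵢ) · t⁻¹ · ι(φ(xᵢ))⁻¹ ∈ G. Then no rᵢ is a proper power: there exist no u ∈ G and integer k ≥ 2 with rᵢ = u^k. -/
namespace FBCAux

/-- shift of a finitely supported function -/
noncomputable def σ (a : ℤ) : (ℤ →₀ ℤ) →+ (ℤ →₀ ℤ) :=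
  Finsupp.mapDomain.addMonoidHom (a + ·)

lemma σ_σ (a b : ℤ) (q : ℤ →₀ ℤ) : σ a (σ b q) = σ (a + b) q := by
  simp only [σ, Finsupp.mapDomain.addMonoidHom_apply]
  rw [← Finsupp.mapDomain_comp]
  congr 1
  funext x
  simp [add_assoc]

lemma σ_zero (q : ℤ →₀ ℤ) : σ 0 q = q := by
  simp only [σ, Finsupp.mapDomain.addMonoidHom_apply]
  have : (fun x : ℤ => 0 + x) = id := by funext x; simp
  rw [show ((0 : ℤ) + ·) = id from this, Finsupp.mapDomain_id]

lemma σ_single (a b c : ℤ) : σ a (Finsupp.single b c) = Finsupp.single (a + b) c := by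
  simp only [σ, Finsupp.mapDomain.addMonoidHom_apply]
  rw [Finsupp.mapDomain_single]

/-- the wreath product ℤ ≀ ℤ, hand rolled -/
structure W where
  p : ℤ →₀ ℤ
  a : ℤ

noncomputable instance : Mul W := ⟨fun x y => ⟨x.p + σ x.a y.p, x.a + y.a⟩⟩
noncomputable instance : One W := ⟨⟨0, 0⟩⟩
noncomputable instance : Inv W := ⟨fun x => ⟨-σ (-x.a) x.p, -x.a⟩⟩

lemma mul_def (x y : W) : x * y = ⟨x.p + σ x.a y.p, x.a + y.a⟩ := rfl
lemma one_def : (1 : W) = ⟨0, 0⟩ := rfl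
lemma inv_def (x : W) : x⁻¹ = ⟨-σ (-x.a) x.p, -x.a⟩ := rfl

noncomputable instance : Group W where
  mul_assoc x y z := by
    simp only [mul_def, map_add, σ_σ, W.mk.injEq]
    exact ⟨by rw [add_assoc], by ring⟩
  one_mul x := by simp [mul_def, one_def, σ_zero]
  mul_one x := by simp [mul_def, one_def]
  inv_mul_cancel x := by simp [mul_def, inv_def, one_def, σ_σ]

/-- shift projection -/
noncomputable def π : W →* Multiplicative ℤ where
  toFun x := Multiplicative.ofAdd x.a
  map_one' := rfl
  map_mul' _ _ := rfl

/-- base inclusion -/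
noncomputable def e : Multiplicative (ℤ →₀ ℤ) →* W where
  toFun q := ⟨q.toAdd, 0⟩
  map_one' := rfl
  map_mul' x y := by
    show (⟨(x * y).toAdd, 0⟩ : W) = ⟨x.toAdd + σ 0 y.toAdd, 0 + 0⟩
    rw [σ_zero]
    rfl

/-- constant base inclusion -/
noncomputable def e' : Multiplicative ℤ →* W where
  toFun c := ⟨Finsupp.single 0 c.toAdd, 0⟩
  map_one' := by
    show (⟨Finsupp.single 0 ((1 : Multiplicative ℤ).toAdd), 0⟩ : W) = 1
    rw [one_def]
    congr 1
    exact Finsupp.single_zero 0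
  map_mul' x y := by
    show (⟨Finsupp.single 0 (x * y).toAdd, 0⟩ : W)
        = ⟨Finsupp.single 0 x.toAdd + σ 0 (Finsupp.single 0 y.toAdd), 0 + 0⟩
    rw [σ_zero]
    congr 1
    exact Finsupp.single_add 0 _ _

lemma e'_apply (m : Multiplicative ℤ) : e' m = ⟨Finsupp.single 0 m.toAdd, 0⟩ := rfl

noncomputable def ψ {n : ℕ} : FreeGroup (Fin n ⊕ Unit) →* W :=
  FreeGroup.lift (fun x => match x with
    | Sum.inl _ => e' (Multiplicative.ofAdd 1)
    | Sum.inr _ => ⟨0, 1⟩)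

noncomputable def χ {n : ℕ} : FreeGroup (Fin n) →* Multiplicative ℤ :=
  FreeGroup.lift (fun _ => Multiplicative.ofAdd 1)

lemma ψ_comp {n : ℕ} : (ψ (n := n)).comp (FreeGroup.map Sum.inl) = e'.comp χ := by
  apply FreeGroup.ext_hom
  intro x
  simp [ψ, χ, FreeGroup.map.of]

end FBCAux

open FBCAux in
/-- **Relators of a free-by-cyclic presentation are not proper powers.** Let `G` be the free
group on `x₁, …, xₙ, t`, let `ι` be the inclusion of the free group on `x₁, …, xₙ` into `G`,
and let `φ` be an automorphism of the free group on `x₁, …, xₙ`. Then no relator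
`rᵢ = t·ι(xᵢ)·t⁻¹·ι(φ(xᵢ))⁻¹` is a proper power. -/
theorem free_by_cyclic_relator_not_proper_power (n : ℕ) (hn : 1 ≤ n)
    (φ : FreeGroup (Fin n) ≃* FreeGroup (Fin n)) (i : Fin n) :
    ¬ ∃ (u : FreeGroup (Fin n ⊕ Unit)) (k : ℤ), 2 ≤ k ∧
      (FreeGroup.of (Sum.inr ()) * FreeGroup.map Sum.inl (FreeGroup.of i) *
          (FreeGroup.of (Sum.inr ()))⁻¹ *
          (FreeGroup.map Sum.inl (φ (FreeGroup.of i)))⁻¹ : FreeGroup (Fin n ⊕ Unit)) =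
        u ^ k := by
  rintro ⟨u, k, hk, hr⟩
  have hψι : ∀ w : FreeGroup (Fin n), ψ (FreeGroup.map Sum.inl w) = e' (χ w) := by
    intro w
    have := DFunLike.congr_fun (ψ_comp (n := n)) w
    simpa using this
  have hψt : ψ (FreeGroup.of (Sum.inr () : Fin n ⊕ Unit)) = ⟨0, 1⟩ := by
    simp [ψ]
  set c : ℤ := (χ (φ (FreeGroup.of i))).toAdd with hc
  -- image of the relator
  have hrel : ψ (FreeGroup.of (Sum.inr ()) * FreeGroup.map Sum.inl (FreeGroup.of i) *
      (FreeGroup.of (Sum.inr ()))⁻¹ *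
      (FreeGroup.map Sum.inl (φ (FreeGroup.of i)))⁻¹ : FreeGroup (Fin n ⊕ Unit))
      = ⟨Finsupp.single 1 1 - Finsupp.single 0 c, 0⟩ := by
    rw [map_mul, map_mul, map_mul, map_inv, map_inv, hψt, hψι, hψι]
    have hχi : χ (FreeGroup.of i) = Multiplicative.ofAdd 1 := by
      simp [χ]
    rw [hχi, e'_apply, e'_apply, ← hc]
    have s1 : (⟨0, 1⟩ : W) * ⟨Finsupp.single 0 ((Multiplicative.ofAdd (1:ℤ)).toAdd), 0⟩
        = ⟨Finsupp.single 1 1, 1⟩ := by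
      rw [mul_def, σ_single]
      simp only [W.mk.injEq, toAdd_ofAdd, zero_add, add_zero, and_self]
    rw [s1, inv_def]
    have s2 : (⟨Finsupp.single 1 1, 1⟩ : W) * ⟨-σ (-(⟨(0:ℤ→₀ℤ), (1:ℤ)⟩ : W).a) (⟨(0:ℤ→₀ℤ), (1:ℤ)⟩ : W).p, -(⟨(0:ℤ→₀ℤ), (1:ℤ)⟩ : W).a⟩
        = ⟨Finsupp.single 1 1, 0⟩ := by
      rw [mul_def]
      simp only [W.mk.injEq, map_zero, neg_zero, map_neg, add_zero, add_neg_cancel, and_self]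
    rw [s2, inv_def, mul_def]
    simp only [W.mk.injEq, neg_zero, σ_zero, map_neg, sub_eq_add_neg, add_zero, and_self]
  -- analyze u
  set v := ψ u with hv
  have hpow : (⟨Finsupp.single 1 1 - Finsupp.single 0 c, 0⟩ : W) = v ^ k := by
    rw [← hrel, hr, map_zpow]
  have hk0 : k ≠ 0 := by omega
  have ha : v.a = 0 := by
    have h3 := congrArg π hpow
    rw [map_zpow] at h3
    have h4 := congrArg Multiplicative.toAdd h3
    rw [toAdd_zpow] at h4
    have h5 : (0 : ℤ) = k • (π v).toAdd := h4
    rcases smul_eq_zero.mp h5.symm with h | h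
    · exact absurd h hk0
    · exact h
  have hvE : v = (⟨v.p, 0⟩ : W) := by rw [← ha]
  have hpow2 : (⟨Finsupp.single 1 1 - Finsupp.single 0 c, 0⟩ : W) = ⟨k • v.p, 0⟩ := by
    rw [hpow, hvE]
    have : (⟨v.p, 0⟩ : W) = e (Multiplicative.ofAdd v.p) := rfl
    rw [this, ← map_zpow]
    show (⟨((Multiplicative.ofAdd v.p) ^ k).toAdd, 0⟩ : W) = _
    rw [toAdd_zpow, toAdd_ofAdd]
    rfl
  have hp : k • v.p = Finsupp.single 1 1 - Finsupp.single 0 c := by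
    have := congrArg W.p hpow2
    exact this.symm
  have h1 : k * v.p 1 = 1 := by
    have h6 := DFunLike.congr_fun hp 1
    rw [Finsupp.smul_apply, Finsupp.sub_apply, Finsupp.single_eq_same,
      Finsupp.single_eq_of_ne (by norm_num)] at h6
    simpa using h6
  have hdvd : k ∣ 1 := ⟨v.p 1, h1.symm⟩
  have := Int.le_of_dvd one_pos hdvd
  omega
end

section
/- (Relators of a free-by-cyclic presentation are pairwise non-conjugate and not conjugate to inverses.) Let n ≥ 1 and let G be the free group on the set {x₁, …, xₙ, t} (formally, the free group on Fin n ⊕ Unit, with t the generator coming from Unit). Let ι denote the inclusion homomorphism from the free group on {x₁, …, xₙ} into G, and let φ be an automorphism of the free group on {x₁, …, xₙ}. For each i define rᵢ := t · ι(xᵢ) · t⁻¹ · ι(φ(xᵢ))⁻¹ ∈ G. Then: (a) for all indices i, j, if rᵢ is conjugate to rⱼ in G, then i = j; and (b) for all indices i, j, the element rᵢ is not conjugate to rⱼ⁻¹ in G. -/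
/-!
Let `A` be the abelianization of the free group on the `xᵢ` and map `G` to the unrestricted
wreath product `(ℤ → A) ⋊ ℤ`, with `ℤ` acting by translation: `xᵢ` goes to the function
supported at `0` with value `[xᵢ]`, and `t` to the generator of `ℤ`. Then `rᵢ` goes to the
function with value `[xᵢ]` at `1` and `[φ xᵢ]⁻¹` at `0`, both nontrivial since `φ` induces an
automorphism of `A`. Conjugation acts on the abelian base by translations only, and a translate
of a function supported in `{0, 1}` that is nontrivial at both points must be the trivial one.
So `rᵢ ~ rⱼ^{±1}` forces `[xᵢ] = [xⱼ]^{±1}` in `A`, which exponent sums rule out unless the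
sign is `+` and `i = j`.
-/

open Multiplicative SemidirectProduct

namespace SemidirectProduct

variable {N G : Type*} [CommGroup N] [Group G] {φ : G →* MulAut N}

theorem exists_apply_eq_of_isConj_inl {a b : N} (h : IsConj (inl a : N ⋊[φ] G) (inl b)) :
    ∃ g, φ g a = b := by
  obtain ⟨c, hc⟩ := isConj_iff.mp h
  refine ⟨c.right, inl_injective (φ := φ) ?_⟩
  calc inl (φ c.right a)
      = inl c.left * inl (φ c.right a) * (inl c.left)⁻¹ := by
        rw [← map_inv, ← map_mul, ← map_mul, mul_inv_cancel_comm]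
    _ = c * inl a * c⁻¹ := by
        conv_rhs => rw [← inl_left_mul_inr_right c]
        simp only [inl_aut, mul_inv_rev, map_inv, mul_assoc]
    _ = inl b := hc

end SemidirectProduct

def shiftHom (M : Type*) [Mul M] : Multiplicative ℤ →* MulAut (ℤ → M) where
  toFun k := MulEquiv.arrowCongr (Equiv.addRight (toAdd k)) (MulEquiv.refl M)
  map_one' := by ext f p; exact congrArg f (sub_zero p)
  map_mul' k l := by
    ext f p
    exact congrArg f (by simp only [toAdd_mul, Equiv.addRight_symm, Equiv.coe_addRight]; ring)

@[simp]
theorem shiftHom_apply {M : Type*} [Mul M] (k : Multiplicative ℤ) (f : ℤ → M) (p : ℤ) :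
    shiftHom M k f p = f (p - toAdd k) :=
  rfl

theorem shiftHom_mulSingle {M : Type*} [MulOneClass M] (k : Multiplicative ℤ) (p : ℤ) (a : M) :
    shiftHom M k (Pi.mulSingle p a) = Pi.mulSingle (p + toAdd k) a := by
  ext q
  simp [Pi.mulSingle_apply, sub_eq_iff_eq_add]

theorem eq_zero_of_comp_sub_eq {M : Type*} [One M] {f g : ℤ → M} {k : ℤ}
    (hf : Function.mulSupport f ⊆ {0, 1}) (hg₀ : g 0 ≠ 1) (hg₁ : g 1 ≠ 1)
    (h : ∀ p, f (p - k) = g p) : k = 0 := by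
  have h₀ : 0 - k ∈ ({0, 1} : Set ℤ) := hf <| by rwa [Function.mem_mulSupport, h]
  have h₁ : 1 - k ∈ ({0, 1} : Set ℤ) := hf <| by rwa [Function.mem_mulSupport, h]
  simp only [Set.mem_insert_iff, Set.mem_singleton_iff] at h₀ h₁
  omega

theorem eq_of_isConj_inl_mulSingle_mul_mulSingle {M : Type*} [CommGroup M] {u v u' v' : M}
    (hu' : u' ≠ 1) (hv' : v' ≠ 1)
    (h : IsConj
      (inl (Pi.mulSingle 1 u * Pi.mulSingle 0 v) : (ℤ → M) ⋊[shiftHom M] Multiplicative ℤ)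
      (inl (Pi.mulSingle 1 u' * Pi.mulSingle 0 v'))) :
    u = u' := by
  obtain ⟨k, hk⟩ := exists_apply_eq_of_isConj_inl h
  have hk₀ : toAdd k = 0 := by
    have hshift (p : ℤ) := congrFun hk p
    simp only [shiftHom_apply] at hshift
    refine eq_zero_of_comp_sub_eq ?_ (by simpa using hv') (by simpa using hu') hshift
    refine (Function.mulSupport_mul _ _).trans (Set.union_subset ?_ ?_) <;>
      exact Pi.mulSupport_mulSingle_subset.trans (by simp)
  simpa [hk₀] using congrFun hk 1

namespace FreeGroup

variable {α : Type*}

def exponentSumAt [DecidableEq α] (i : α) : Abelianization (FreeGroup α) →* Multiplicative ℤ :=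
  Abelianization.lift (FreeGroup.lift (Pi.mulSingle i (ofAdd 1) : α → Multiplicative ℤ))

theorem exponentSumAt_of_of [DecidableEq α] (i j : α) :
    exponentSumAt i (Abelianization.of (of j)) = if j = i then ofAdd 1 else 1 := by
  simp [exponentSumAt, Pi.mulSingle_apply]

theorem abelianization_of_of_ne_one (i : α) : Abelianization.of (of i) ≠ 1 := by
  classical
  intro h
  simpa [exponentSumAt_of_of] using congrArg (exponentSumAt i) h

theorem abelianization_of_of_injective :
    Function.Injective fun i : α => Abelianization.of (of i) := by
  classical
  intro i j h
  by_contra hij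
  simpa [exponentSumAt_of_of, Ne.symm hij] using congrArg (exponentSumAt i) h

theorem abelianization_of_of_ne_inv (i j : α) :
    Abelianization.of (of i) ≠ (Abelianization.of (of j))⁻¹ := by
  classical
  intro h
  have := congrArg (exponentSumAt i) h
  by_cases hij : i = j
  · simp [exponentSumAt_of_of, hij, ← ofAdd_neg] at this
  · simp [exponentSumAt_of_of, Ne.symm hij] at this

end FreeGroup

section toWreath

variable {α : Type*}

variable (α) in
def toWreath :
    FreeGroup (α ⊕ Unit) →* (ℤ → Abelianization (FreeGroup α)) ⋊[shiftHom _] Multiplicative ℤ :=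
  FreeGroup.lift <| Sum.elim
    (fun i => inl (Pi.mulSingle (0 : ℤ) (Abelianization.of (FreeGroup.of i))))
    fun _ => inr (ofAdd 1)

theorem toWreath_map_inl (x : FreeGroup α) :
    toWreath α (FreeGroup.map Sum.inl x) = inl (Pi.mulSingle (0 : ℤ) (Abelianization.of x)) := by
  have : (toWreath α).comp (FreeGroup.map Sum.inl) =
      (inl.comp (MonoidHom.mulSingle (fun _ : ℤ => Abelianization (FreeGroup α)) 0)).comp
        Abelianization.of := by
    refine FreeGroup.ext_hom _ _ fun i => ?_
    simp [toWreath]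
  exact DFunLike.congr_fun this x

theorem toWreath_relator (x y : FreeGroup α) :
    toWreath α (FreeGroup.of (Sum.inr ()) * FreeGroup.map Sum.inl x *
        (FreeGroup.of (Sum.inr ()))⁻¹ * (FreeGroup.map Sum.inl y)⁻¹) =
      inl (Pi.mulSingle (1 : ℤ) (Abelianization.of x) *
        Pi.mulSingle (0 : ℤ) (Abelianization.of y)⁻¹) := by
  have ht : toWreath α (FreeGroup.of (Sum.inr ())) = inr (ofAdd 1) := FreeGroup.lift_apply_of
  have hconj (a : Abelianization (FreeGroup α)) :
      inr (ofAdd 1) * inl (Pi.mulSingle 0 a) * (inr (ofAdd 1))⁻¹ =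
        (inl (Pi.mulSingle 1 a) : (ℤ → _) ⋊[shiftHom _] Multiplicative ℤ) := by
    rw [← map_inv, ← inl_aut, shiftHom_mulSingle, toAdd_ofAdd, zero_add]
  rw [map_mul, map_mul, map_mul, map_inv, map_inv, ht, toWreath_map_inl, toWreath_map_inl, hconj,
    ← map_inv, ← map_mul, Pi.mulSingle_inv]

end toWreath

theorem free_by_cyclic_relators_nonconjugate_general (n : ℕ)
    (φ : FreeGroup (Fin n) ≃* FreeGroup (Fin n))
    (r : Fin n → FreeGroup (Fin n ⊕ Unit))
    (hr : ∀ i : Fin n, r i =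
      FreeGroup.of (Sum.inr ()) * FreeGroup.map Sum.inl (FreeGroup.of i) *
        (FreeGroup.of (Sum.inr ()))⁻¹ * (FreeGroup.map Sum.inl (φ (FreeGroup.of i)))⁻¹) :
    (∀ i j : Fin n, IsConj (r i) (r j) → i = j) ∧
    (∀ i j : Fin n, ¬ IsConj (r i) ((r j)⁻¹)) := by
  have hφ (i : Fin n) : Abelianization.of (φ (FreeGroup.of i)) ≠ 1 := by
    rw [← abelianizationCongr_of, map_ne_one_iff _ (MulEquiv.injective _)]
    exact FreeGroup.abelianization_of_of_ne_one i
  refine ⟨fun i j h => ?_, fun i j h => ?_⟩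
  · replace h := (toWreath (Fin n)).map_isConj h
    rw [hr, hr, toWreath_relator, toWreath_relator] at h
    exact FreeGroup.abelianization_of_of_injective <| eq_of_isConj_inl_mulSingle_mul_mulSingle
      (FreeGroup.abelianization_of_of_ne_one j) (inv_ne_one.mpr (hφ j)) h
  · replace h := (toWreath (Fin n)).map_isConj h
    rw [map_inv, hr, hr, toWreath_relator, toWreath_relator, ← map_inv inl] at h
    simp only [mul_inv, ← Pi.mulSingle_inv, inv_inv] at h
    exact FreeGroup.abelianization_of_of_ne_inv i j <| eq_of_isConj_inl_mulSingle_mul_mulSingle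
      (inv_ne_one.mpr (FreeGroup.abelianization_of_of_ne_one j)) (hφ j) h

/-- **Relators of a free-by-cyclic presentation are pairwise non-conjugate and not conjugate to
inverses.** Let `G` be the free group on `x₁, …, xₙ, t`, let `ι` be the inclusion of the free
group on `x₁, …, xₙ` into `G`, and let `φ` be an automorphism of the free group on
`x₁, …, xₙ`. Set `rᵢ = t·ι(xᵢ)·t⁻¹·ι(φ(xᵢ))⁻¹`. Then (a) `rᵢ` conjugate to `rⱼ` implies
`i = j`, and (b) `rᵢ` is never conjugate to `rⱼ⁻¹`. -/
theorem free_by_cyclic_relators_nonconjugate (n : ℕ) (hn : 1 ≤ n)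
    (φ : FreeGroup (Fin n) ≃* FreeGroup (Fin n))
    (r : Fin n → FreeGroup (Fin n ⊕ Unit))
    (hr : ∀ i : Fin n, r i =
      FreeGroup.of (Sum.inr ()) * FreeGroup.map Sum.inl (FreeGroup.of i) *
        (FreeGroup.of (Sum.inr ()))⁻¹ * (FreeGroup.map Sum.inl (φ (FreeGroup.of i)))⁻¹) :
    (∀ i j : Fin n, IsConj (r i) (r j) → i = j) ∧
    (∀ i j : Fin n, ¬ IsConj (r i) ((r j)⁻¹)) :=
  free_by_cyclic_relators_nonconjugate_general n φ r hr
end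

section
/- (Extension of a predimension, additivity.) Let R be a ring and pdim a predimension on R. Define, for every R-module M, dim(M) := sup { pdim(P) : P a finitely generated projective submodule of M } ∈ [0, +∞]. Then for every short exact sequence of R-modules 0 → A → B → C → 0, one has dim(B) = dim(A) + dim(C), where the sum is taken in [0, +∞] in the natural way. -/
/-! Let `P ⊆ B` be finitely generated projective and `K := P ∩ A`. The closure `K̄` of `K` in `P`
is a direct summand, `P = K̄ ⊕ D`, and `D ∩ K = 0`, so `D` embeds into `C`; the closure axiom
bounds `pdim K̄` by `dim K ≤ dim A`. Hence `dim B ≤ dim A + dim C`. Conversely, finitely generated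
projective `P ⊆ A` and `Q ⊆ C` give an embedding `P ⊕ Q ↪ B` by lifting `Q` along `B → C`. -/

open scoped ENNReal

universe u v

/-- The closure of a submodule `K ⊆ N`: the intersection of the kernels of all `R`-linear
functionals `N →ₗ[R] R` vanishing on `K`. -/
def submoduleClosure (R : Type v) [Ring R] {N : Type u} [AddCommGroup N] [Module R N]
    (K : Submodule R N) : Submodule R N :=
  sInf {p : Submodule R N | ∃ f : N →ₗ[R] R, (∀ x ∈ K, f x = 0) ∧ p = LinearMap.ker f}

/-- A *predimension* on a ring `R`: an assignment of a finite value to every finitely generated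
projective (left) `R`-module that is isomorphism-invariant, additive under direct sums, and
such that for every submodule `K` of a finitely generated projective module `Q`, the closure of
`K` in `Q` is a direct summand of `Q` whose predimension is the supremum of the predimensions
of the finitely generated projective submodules of `K`.

(The underlying function is defined on all `R`-modules in the universe `u`; its values on
modules that are not finitely generated projective are irrelevant.) -/
structure Predimension (R : Type v) [Ring R] where
  pdim : (M : Type u) → [AddCommGroup M] → [Module R M] → ℝ≥0∞
  pdim_ne_top : ∀ (M : Type u) [AddCommGroup M] [Module R M],
    Module.Finite R M → Module.Projective R M → pdim M ≠ ⊤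
  pdim_congr : ∀ (P Q : Type u) [AddCommGroup P] [Module R P] [AddCommGroup Q] [Module R Q],
    Module.Finite R P → Module.Projective R P → Module.Finite R Q → Module.Projective R Q →
    Nonempty (P ≃ₗ[R] Q) → pdim P = pdim Q
  pdim_add : ∀ (P Q : Type u) [AddCommGroup P] [Module R P] [AddCommGroup Q] [Module R Q],
    Module.Finite R P → Module.Projective R P → Module.Finite R Q → Module.Projective R Q →
    pdim (P × Q) = pdim P + pdim Q
  closure_isCompl : ∀ (Q : Type u) [AddCommGroup Q] [Module R Q],
    Module.Finite R Q → Module.Projective R Q → ∀ K : Submodule R Q,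
      ∃ C : Submodule R Q, IsCompl (submoduleClosure R K) C
  pdim_closure : ∀ (Q : Type u) [AddCommGroup Q] [Module R Q],
    Module.Finite R Q → Module.Projective R Q → ∀ K : Submodule R Q,
      pdim ↥(submoduleClosure R K) =
        sSup {x : ℝ≥0∞ | ∃ P : Submodule R Q, P ≤ K ∧
          Module.Finite R ↥P ∧ Module.Projective R ↥P ∧ x = pdim ↥P}

/-- The dimension function extending a predimension: `dim M` is the supremum of the
predimensions of the finitely generated projective submodules of `M`. -/
noncomputable def Predimension.dim {R : Type v} [Ring R] (pd : Predimension.{u, v} R)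
    (M : Type u) [AddCommGroup M] [Module R M] : ℝ≥0∞ :=
  sSup {x : ℝ≥0∞ | ∃ P : Submodule R M,
    Module.Finite R ↥P ∧ Module.Projective R ↥P ∧ x = pd.pdim ↥P}

theorem le_submoduleClosure {R : Type v} [Ring R] {N : Type u} [AddCommGroup N] [Module R N]
    (K : Submodule R N) : K ≤ submoduleClosure R K :=
  le_sInf fun _ ⟨_, hφ, hp⟩ x hx => hp ▸ hφ x hx

namespace Submodule

variable {R : Type*} [Ring R] {E : Type*} [AddCommGroup E] [Module R E] {p q : Submodule R E}

theorem finite_of_isCompl [Module.Finite R E] (h : IsCompl p q) : Module.Finite R p :=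
  .of_surjective _ (projectionOnto_surjective h)

theorem projective_of_isCompl [Module.Projective R E] (h : IsCompl p q) :
    Module.Projective R p :=
  .of_split p.subtype _ (projectionOnto_comp_subtype h)

end Submodule

theorem LinearMap.injective_coprod_of_comp_eq_zero {R : Type*} [Ring R]
    {A B C Q : Type*} [AddCommGroup A] [Module R A] [AddCommGroup B] [Module R B]
    [AddCommGroup C] [Module R C] [AddCommGroup Q] [Module R Q]
    {f : A →ₗ[R] B} {g : B →ₗ[R] C} {s : Q →ₗ[R] B}
    (hf : Function.Injective f) (hgf : g ∘ₗ f = 0) (hgs : Function.Injective (g ∘ₗ s)) :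
    Function.Injective (f.coprod s) := by
  refine LinearMap.ker_eq_bot.mp (LinearMap.ker_eq_bot'.mpr ?_)
  rintro ⟨a, x⟩ hax
  have hgfa : g (f a) = 0 := LinearMap.congr_fun hgf a
  have hx : x = 0 := hgs (by simpa [hgfa] using congrArg g hax)
  subst hx
  have ha : a = 0 := hf (by simpa using hax)
  rw [ha, Prod.mk_zero_zero]

namespace Predimension

variable {R : Type v} [Ring R] (pd : Predimension.{u, v} R)
  {M N : Type u} [AddCommGroup M] [Module R M] [AddCommGroup N] [Module R N]

theorem dim_eq_iSup :
    pd.dim M = ⨆ (P : Submodule R M) (_ : Module.Finite R P ∧ Module.Projective R P),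
      pd.pdim P := by
  refine le_antisymm (sSup_le ?_) (iSup₂_le fun P hP => le_sSup ⟨P, hP.1, hP.2, rfl⟩)
  rintro _ ⟨P, hPfin, hPproj, rfl⟩
  exact le_iSup₂_of_le P ⟨hPfin, hPproj⟩ le_rfl

theorem dim_le {a : ℝ≥0∞}
    (h : ∀ P : Submodule R M, Module.Finite R P → Module.Projective R P → pd.pdim P ≤ a) :
    pd.dim M ≤ a :=
  sSup_le fun _ ⟨P, hPfin, hPproj, hx⟩ => hx ▸ h P hPfin hPproj

theorem pdim_le_dim_of_injective [Module.Finite R N] [Module.Projective R N]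
    (φ : N →ₗ[R] M) (hφ : Function.Injective φ) : pd.pdim N ≤ pd.dim M := by
  let e := LinearEquiv.ofInjective φ hφ
  have hfin : Module.Finite R (LinearMap.range φ) := .equiv e
  have hproj : Module.Projective R (LinearMap.range φ) := .of_equiv e
  rw [pd.pdim_congr _ _ inferInstance inferInstance hfin hproj ⟨e⟩]
  exact le_sSup ⟨_, hfin, hproj, rfl⟩

theorem dim_le_dim_of_injective (φ : M →ₗ[R] N) (hφ : Function.Injective φ) :
    pd.dim M ≤ pd.dim N :=
  pd.dim_le fun P _ _ => pd.pdim_le_dim_of_injective (φ ∘ₗ P.subtype) (hφ.comp P.injective_subtype)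

theorem pdim_eq_add_of_isCompl [hfin : Module.Finite R M] [hproj : Module.Projective R M]
    {p q : Submodule R M} (h : IsCompl p q) : pd.pdim M = pd.pdim p + pd.pdim q := by
  have := Submodule.finite_of_isCompl h
  have := Submodule.finite_of_isCompl h.symm
  have := Submodule.projective_of_isCompl h
  have := Submodule.projective_of_isCompl h.symm
  rw [← pd.pdim_add _ _ inferInstance inferInstance inferInstance inferInstance]
  exact pd.pdim_congr _ _ hfin hproj inferInstance inferInstance
    ⟨(Submodule.prodEquivOfIsCompl p q h).symm⟩

theorem pdim_closure_le_dim [hfin : Module.Finite R M] [hproj : Module.Projective R M]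
    (K : Submodule R M) : pd.pdim (submoduleClosure R K) ≤ pd.dim K := by
  rw [pd.pdim_closure M hfin hproj K]
  refine sSup_le ?_
  rintro _ ⟨P, hPK, hPfin, hPproj, rfl⟩
  exact pd.pdim_le_dim_of_injective (Submodule.inclusion hPK) (Submodule.inclusion_injective hPK)

theorem pdim_le_dim_ker_add_dim [hfin : Module.Finite R M] [hproj : Module.Projective R M]
    (φ : M →ₗ[R] N) : pd.pdim M ≤ pd.dim (LinearMap.ker φ) + pd.dim N := by
  obtain ⟨D, hD⟩ := pd.closure_isCompl M hfin hproj (LinearMap.ker φ)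
  have := Submodule.finite_of_isCompl hD.symm
  have := Submodule.projective_of_isCompl hD.symm
  have hφD : Function.Injective (φ.domRestrict D) :=
    LinearMap.injective_domRestrict_iff.mpr
      (hD.disjoint.symm.mono_right (le_submoduleClosure _))
  rw [pd.pdim_eq_add_of_isCompl hD]
  exact add_le_add (pd.pdim_closure_le_dim _) (pd.pdim_le_dim_of_injective _ hφD)

theorem dim_le_dim_of_range_le {L : Type u} [AddCommGroup L] [Module R L]
    (φ : M →ₗ[R] N) (hφ : Function.Injective φ) (ψ : L →ₗ[R] N) (hψ : Function.Injective ψ)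
    (h : LinearMap.range ψ ≤ LinearMap.range φ) : pd.dim L ≤ pd.dim M :=
  pd.dim_le_dim_of_injective
    ((LinearEquiv.ofInjective φ hφ).symm ∘ₗ ψ.codRestrict _ fun x => h ⟨x, rfl⟩)
    (by simpa using hψ)

variable {A B C : Type u} [AddCommGroup A] [Module R A] [AddCommGroup B] [Module R B]
  [AddCommGroup C] [Module R C] {f : A →ₗ[R] B} {g : B →ₗ[R] C}

theorem dim_le_add_of_ker_le_range (hf : Function.Injective f)
    (hfg : LinearMap.ker g ≤ LinearMap.range f) : pd.dim B ≤ pd.dim A + pd.dim C := by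
  refine pd.dim_le fun P _ _ => (pd.pdim_le_dim_ker_add_dim (g ∘ₗ P.subtype)).trans ?_
  gcongr
  refine pd.dim_le_dim_of_range_le f hf (P.subtype ∘ₗ (LinearMap.ker (g ∘ₗ P.subtype)).subtype)
    (P.injective_subtype.comp (Submodule.injective_subtype _)) ?_
  rintro _ ⟨x, rfl⟩
  exact hfg x.2

theorem add_dim_le_of_range_le_ker (hf : Function.Injective f) (hg : Function.Surjective g)
    (hfg : LinearMap.range f ≤ LinearMap.ker g) : pd.dim A + pd.dim C ≤ pd.dim B := by
  have hne : ∀ (X : Type u) [AddCommGroup X] [Module R X],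
      ∃ P : Submodule R X, Module.Finite R P ∧ Module.Projective R P :=
    fun _ _ _ => ⟨⊥, inferInstance, .of_free⟩
  rw [pd.dim_eq_iSup (M := A), pd.dim_eq_iSup (M := C)]
  refine ENNReal.biSup_add_biSup_le' (hne A) (hne C) fun P ⟨hPfin, hPproj⟩ Q ⟨hQfin, hQproj⟩ => ?_
  obtain ⟨s, hs⟩ := Module.projective_lifting_property g Q.subtype hg
  have hgf : g ∘ₗ (f ∘ₗ P.subtype) = 0 := by
    rw [← LinearMap.comp_assoc, LinearMap.range_le_ker_iff.mp hfg, LinearMap.zero_comp]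
  rw [← pd.pdim_add _ _ hPfin hPproj hQfin hQproj]
  exact pd.pdim_le_dim_of_injective _ (LinearMap.injective_coprod_of_comp_eq_zero
    (hf.comp P.injective_subtype) hgf (hs ▸ Q.injective_subtype))

end Predimension

/-- **Extension of a predimension, additivity.** For every short exact sequence
`0 → A → B → C → 0` of `R`-modules, `dim B = dim A + dim C`. -/
theorem Predimension.dim_additive {R : Type v} [Ring R] (pd : Predimension.{u, v} R)
    (A B C : Type u) [AddCommGroup A] [Module R A] [AddCommGroup B] [Module R B]
    [AddCommGroup C] [Module R C] (f : A →ₗ[R] B) (g : B →ₗ[R] C)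
    (hf : Function.Injective f) (hg : Function.Surjective g)
    (hfg : LinearMap.range f = LinearMap.ker g) :
    pd.dim B = pd.dim A + pd.dim C :=
  le_antisymm (pd.dim_le_add_of_ker_le_range hf hfg.ge) (pd.add_dim_le_of_range_le_ker hf hg hfg.le)
end
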